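/- Let φ be a formula in 3-CNF with m clauses in which every clause has exactly three distinct literals over distinct variables. Form G as in the clause-triangle construction (one triangle per clause, with the cross-triangle edges for equal and complementary literals as described). Then every independent set of G of size m contains exactly one vertex from each triangle, and conversely the independent sets of size m are exactly the sets {v_{1,j₁}, …, v_{m,j_m}} (one vertex per triangle) such that the literal labels ℓ(v_{i,j_i}) admit a consistent truth assignment making all of them true and making all other literals in all clauses false. -/
import Mathlib


open Finset
open scoped Classical

/-- A literal over `n` Boolean variables: a variable together with a sign. -/
structure Lit (n : ℕ) where
  var : Fin n
  pos : Bool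
deriving DecidableEq

/-- The negation of a literal. -/
def Lit.neg {n : ℕ} (l : Lit n) : Lit n := ⟨l.var, !l.pos⟩

/-- Evaluation of a literal under a truth assignment. -/
def Lit.eval {n : ℕ} (σ : Fin n → Bool) (l : Lit n) : Bool :=
  if l.pos then σ l.var else !(σ l.var)

/-- A finset of vertices is independent in `G` if no two of its members are adjacent. -/
def IndepSet {V : Type*} (G : SimpleGraph V) (A : Finset V) : Prop :=
  ∀ u ∈ A, ∀ v ∈ A, ¬ G.Adj u v

/-- The clause-triangle graph of a 3-CNF formula `φ` with `m` clauses of three literals: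
one triangle per clause, together with the cross-triangle edges for equal literals and
for complementary literals. -/
def clauseGraph {n m : ℕ} (φ : Fin m → Fin 3 → Lit n) :
    SimpleGraph (Fin m × Fin 3) :=
  SimpleGraph.fromRel (fun u v =>
    (u.1 = v.1 ∧ u.2 ≠ v.2) ∨
    (u.1 ≠ v.1 ∧ (
      (∃ j : Fin 3, j ≠ v.2 ∧ φ v.1 j = φ u.1 u.2) ∨
      (φ u.1 u.2 = (φ v.1 v.2).neg) ∨
      (∃ j j' : Fin 3, j ≠ u.2 ∧ j' ≠ v.2 ∧ φ u.1 j = (φ v.1 j').neg))))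

lemma Lit.eval_neg {n : ℕ} (σ : Fin n → Bool) (l : Lit n) :
    l.neg.eval σ = !(l.eval σ) := by
  cases h : l.pos <;> simp [Lit.neg, Lit.eval, h]

lemma Lit.eq_or_eq_neg {n : ℕ} (a b : Lit n) (h : a.var = b.var) :
    a = b ∨ a = b.neg := by
  cases a with
  | mk av ap =>
    cases b with
    | mk bv bp =>
      simp only [Lit.neg] at *
      subst h
      cases ap <;> cases bp <;> simp

lemma Lit.eval_eq_true_iff {n : ℕ} (σ : Fin n → Bool) (l : Lit n) :
    l.eval σ = true ↔ σ l.var = l.pos := by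
  cases h : l.pos <;> simp [Lit.eval, h]

/-- Part 1: every independent set of size `m` has exactly one vertex per triangle. -/
lemma clauseGraph_part1 {n m : ℕ} (φ : Fin m → Fin 3 → Lit n)
    (A : Finset (Fin m × Fin 3)) (hA : IndepSet (clauseGraph φ) A)
    (hcard : A.card = m) : ∀ i : Fin m, ∃! j : Fin 3, (i, j) ∈ A := by
  have hinj : ∀ u ∈ A, ∀ v ∈ A, u.1 = v.1 → u = v := by
    intro u hu v hv h1
    by_contra hne
    apply hA u hu v hv
    rw [clauseGraph, SimpleGraph.fromRel_adj]
    refine ⟨hne, Or.inl (Or.inl ⟨h1, ?_⟩)⟩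
    intro h2
    exact hne (Prod.ext h1 h2)
  have himg : A.image Prod.fst = Finset.univ := by
    apply Finset.eq_univ_of_card
    rw [Finset.card_image_of_injOn, hcard, Fintype.card_fin]
    intro u hu v hv h
    exact hinj u hu v hv h
  intro i
  have hi : i ∈ A.image Prod.fst := by rw [himg]; exact Finset.mem_univ i
  rcases Finset.mem_image.mp hi with ⟨u, hu, hu1⟩
  refine ⟨u.2, ?_, ?_⟩
  · have he : u = (i, u.2) := Prod.ext hu1 rfl
    rwa [he] at hu
  intro j hj
  have h := hinj (i, j) hj u hu (by rw [hu1])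
  exact congrArg Prod.snd h

/-- Every independent set of size `m` in the clause-triangle graph contains exactly one
vertex per triangle, and the independent sets of size `m` are exactly the one-vertex-per-
triangle selections `f` for which some truth assignment makes precisely the chosen
literals true and all other literals of all clauses false. -/
theorem indepSets_are_selections {n m : ℕ} (φ : Fin m → Fin 3 → Lit n)
    (hvars : ∀ i : Fin m, Function.Injective (fun j => (φ i j).var)) :
    (∀ A : Finset (Fin m × Fin 3), IndepSet (clauseGraph φ) A → A.card = m →
      ∀ i : Fin m, ∃! j : Fin 3, (i, j) ∈ A) ∧
    (∀ A : Finset (Fin m × Fin 3),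
      (IndepSet (clauseGraph φ) A ∧ A.card = m) ↔
      (∃ f : Fin m → Fin 3,
        A = Finset.univ.image (fun i : Fin m => (i, f i)) ∧
        ∃ σ : Fin n → Bool, ∀ i : Fin m, ∀ j : Fin 3,
          ((φ i j).eval σ = true ↔ j = f i))) := by
  refine ⟨clauseGraph_part1 φ, fun A => ⟨?_, ?_⟩⟩
  · -- forward direction
    rintro ⟨hA, hcard⟩
    have hex := clauseGraph_part1 φ A hA hcard
    set f : Fin m → Fin 3 := fun i => ((hex i).exists).choose with hf
    have hfA : ∀ i, (i, f i) ∈ A := fun i => ((hex i).exists).choose_spec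
    -- key non-adjacency facts
    have key : ∀ i i' : Fin m, i ≠ i' →
        (∀ j, j ≠ f i' → φ i' j ≠ φ i (f i)) ∧
        φ i (f i) ≠ (φ i' (f i')).neg ∧
        (∀ j j', j ≠ f i → j' ≠ f i' → φ i j ≠ (φ i' j').neg) := by
      intro i i' hne
      have hadj := hA (i, f i) (hfA i) (i', f i') (hfA i')
      rw [clauseGraph, SimpleGraph.fromRel_adj] at hadj
      have hne' : (i, f i) ≠ (i', f i') := by
        intro h; exact hne (congrArg Prod.fst h)
      refine ⟨?_, ?_, ?_⟩
      · intro j hj hje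
        exact hadj ⟨hne', Or.inl (Or.inr ⟨hne, Or.inl ⟨j, hj, hje⟩⟩)⟩
      · intro he
        exact hadj ⟨hne', Or.inl (Or.inr ⟨hne, Or.inr (Or.inl he)⟩)⟩
      · intro j j' hj hj' hje
        exact hadj ⟨hne', Or.inl (Or.inr ⟨hne, Or.inr (Or.inr ⟨j, j', hj, hj', hje⟩)⟩)⟩
    -- A is the image of f
    have hginj : Function.Injective (fun i : Fin m => (i, f i)) := by
      intro a b h; exact congrArg Prod.fst h
    have hAeq : A = Finset.univ.image (fun i : Fin m => (i, f i)) := by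
      have hsub : Finset.univ.image (fun i : Fin m => (i, f i)) ⊆ A := by
        intro u hu
        rcases Finset.mem_image.mp hu with ⟨i, _, rfl⟩
        exact hfA i
      have hcard' : (Finset.univ.image (fun i : Fin m => (i, f i))).card = m := by
        rw [Finset.card_image_of_injective _ hginj, Finset.card_univ, Fintype.card_fin]
      exact (Finset.eq_of_subset_of_card_le hsub (by rw [hcard, hcard'])).symm
    refine ⟨f, hAeq, ?_⟩
    -- construct the assignment
    set σ : Fin n → Bool := fun x =>
      if h : ∃ i : Fin m, (φ i (f i)).var = x then (φ h.choose (f h.choose)).pos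
      else if h2 : ∃ p : Fin m × Fin 3, p.2 ≠ f p.1 ∧ (φ p.1 p.2).var = x
      then !(φ h2.choose.1 h2.choose.2).pos
      else false with hσdef
    refine ⟨σ, ?_⟩
    have hsel' : ∀ i, σ (φ i (f i)).var = (φ i (f i)).pos := by
      intro i
      simp only [hσdef]
      have hw : ∃ i' : Fin m, (φ i' (f i')).var = (φ i (f i)).var := ⟨i, rfl⟩
      rw [dif_pos hw]
      have hcv : (φ hw.choose (f hw.choose)).var = (φ i (f i)).var := hw.choose_spec
      by_cases hci : hw.choose = i
      · rw [hci]
      · rcases Lit.eq_or_eq_neg (φ hw.choose (f hw.choose)) (φ i (f i)) hcv with h | h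
        · exact congrArg Lit.pos h
        · exact absurd h (key hw.choose i hci).2.1
    have huns : ∀ i j, j ≠ f i → σ (φ i j).var = !(φ i j).pos := by
      intro i j hsel
      simp only [hσdef]
      by_cases hw : ∃ i' : Fin m, (φ i' (f i')).var = (φ i j).var
      · rw [dif_pos hw]
        have hcv : (φ hw.choose (f hw.choose)).var = (φ i j).var := hw.choose_spec
        have hci : hw.choose ≠ i := by
          intro h
          rw [h] at hcv
          exact hsel (hvars i hcv).symm
        rcases Lit.eq_or_eq_neg (φ i j) (φ hw.choose (f hw.choose)) hcv.symm with h | h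
        · exact absurd h ((key hw.choose i hci).1 j hsel)
        · have hpp : (φ i j).pos = !(φ hw.choose (f hw.choose)).pos := congrArg Lit.pos h
          rw [hpp, Bool.not_not]
      · rw [dif_neg hw]
        have hw2 : ∃ p : Fin m × Fin 3, p.2 ≠ f p.1 ∧ (φ p.1 p.2).var = (φ i j).var :=
          ⟨(i, j), hsel, rfl⟩
        rw [dif_pos hw2]
        have hp1 : hw2.choose.2 ≠ f hw2.choose.1 := hw2.choose_spec.1
        have hp2 : (φ hw2.choose.1 hw2.choose.2).var = (φ i j).var := hw2.choose_spec.2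
        by_cases hpi : hw2.choose.1 = i
        · rw [hpi] at hp2
          have h2j : hw2.choose.2 = j := hvars i hp2
          rw [hpi, h2j]
        · rcases Lit.eq_or_eq_neg (φ hw2.choose.1 hw2.choose.2) (φ i j) hp2 with h | h
          · exact congrArg (fun l => !(Lit.pos l)) h
          · exact absurd h ((key hw2.choose.1 i hpi).2.2 hw2.choose.2 j hp1 hsel)
    intro i j
    rw [Lit.eval_eq_true_iff]
    by_cases h : j = f i
    · subst h
      simp [hsel' i]
    · rw [huns i j h]
      constructor
      · intro hb
        exact absurd hb (by cases (φ i j).pos <;> simp)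
      · intro hb; exact absurd hb h
  · -- backward direction
    rintro ⟨f, hAeq, σ, hσ⟩
    have hginj : Function.Injective (fun i : Fin m => (i, f i)) := by
      intro a b h; exact congrArg Prod.fst h
    have evf : ∀ (a : Fin m) (b : Fin 3), b ≠ f a → (φ a b).eval σ = false := by
      intro a b hb
      rcases Bool.eq_false_or_eq_true ((φ a b).eval σ) with h | h
      · exact absurd ((hσ a b).mp h) hb
      · exact h
    constructor
    · intro u hu v hv hadj
      rw [hAeq] at hu hv
      rcases Finset.mem_image.mp hu with ⟨i, _, rfl⟩
      rcases Finset.mem_image.mp hv with ⟨i', _, rfl⟩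
      rw [clauseGraph, SimpleGraph.fromRel_adj] at hadj
      obtain ⟨hne, hr⟩ := hadj
      have hii' : i ≠ i' := by
        intro h; subst h; exact hne rfl
      have main : ∀ (x y : Fin m), x ≠ y →
          ¬((x = y ∧ f x ≠ f y) ∨
            (x ≠ y ∧ (
              (∃ j : Fin 3, j ≠ f y ∧ φ y j = φ x (f x)) ∨
              (φ x (f x) = (φ y (f y)).neg) ∨
              (∃ j j' : Fin 3, j ≠ f x ∧ j' ≠ f y ∧ φ x j = (φ y j').neg)))) := by
        intro x y hxy h
        rcases h with ⟨h1, _⟩ | ⟨_, h⟩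
        · exact hxy h1
        rcases h with ⟨j, hj, hjeq⟩ | h | ⟨j, j', hj, hj', hjeq⟩
        · have h1 : (φ y j).eval σ = false := evf y j hj
          have h2 : (φ y j).eval σ = true := by rw [hjeq]; exact (hσ x (f x)).mpr rfl
          rw [h1] at h2; exact Bool.false_ne_true h2
        · have h1 : (φ x (f x)).eval σ = true := (hσ x (f x)).mpr rfl
          have h2 : ((φ y (f y)).neg).eval σ = !((φ y (f y)).eval σ) := Lit.eval_neg σ _
          rw [h, h2, (hσ y (f y)).mpr rfl] at h1
          simp at h1
        · have h1 : (φ x j).eval σ = false := evf x j hj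
          have h3 : ((φ y j').neg).eval σ = true := by
            rw [Lit.eval_neg, evf y j' hj']; rfl
          rw [hjeq, h3] at h1
          simp at h1
      rcases hr with hr | hr
      · exact main i i' hii' hr
      · exact main i' i hii'.symm hr
    · rw [hAeq, Finset.card_image_of_injective _ hginj, Finset.card_univ, Fintype.card_fin]
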